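/- arXiv:2309.02370 — 6 statements merged into one kernel-verified Lean document; each statement's English description precedes it below -/
import Mathlib

section
/- Let m ≥ 3 and let A be an (m−1)×m integer matrix. Let A′ be the bordered matrix of A and let B be the truncation of A. Then the degeneration vectors satisfy: d(A′)_j = −2·d(A)_j − d(B)_j for all 1 ≤ j ≤ m−1; d(A′)_m = −2·d(A)_m; and d(A′)_{m+1} = −d(A)_m. -/
/-- The degeneration vector of an `r × (r+1)` integer matrix `A`:
its `j`-th entry is `(-1)^j` times the determinant of the square matrix
obtained from `A` by deleting the `j`-th column (0-indexed). -/
def degVec {r : ℕ} (A : Matrix (Fin r) (Fin (r + 1)) ℤ) : Fin (r + 1) → ℤ :=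
  fun j => (-1) ^ (j : ℕ) * (A.submatrix id j.succAbove).det

/-- The bordered matrix of an `r × (r+1)` integer matrix `A`: `A` with the row
`(0, …, 0, 1, -2)` adjoined at the bottom and the column `(0, …, 0, 1, -2)ᵀ`
adjoined at the right. -/
def border {r : ℕ} (A : Matrix (Fin r) (Fin (r + 1)) ℤ) :
    Matrix (Fin (r + 1)) (Fin (r + 2)) ℤ :=
  Matrix.of fun i j =>
    if hi : (i : ℕ) < r then
      if hj : (j : ℕ) < r + 1 then A ⟨i, hi⟩ ⟨j, hj⟩
      else if (i : ℕ) = r - 1 then 1 else 0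
    else
      if (j : ℕ) = r then 1 else if (j : ℕ) = r + 1 then -2 else 0

/-- The truncation of an `(r+1) × (r+2)` integer matrix: delete the last row and
the last column. -/
def trunc {r : ℕ} (A : Matrix (Fin (r + 1)) (Fin (r + 2)) ℤ) :
    Matrix (Fin r) (Fin (r + 1)) ℤ :=
  Matrix.of fun i j => A i.castSucc j.castSucc

/-!
Each entry of `d(A')` is a signed maximal minor of `A'`. Expanding it along the last row
`(0, …, 0, 1, -2)` of `A'` leaves at most two terms: the `-2` term is the corresponding minor
of `A`, and the `1` term, present only when one of the first `m - 1` columns is deleted, is a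
minor whose last column is `(0, …, 0, 1)ᵀ`; expanding along that column gives the
corresponding minor of the truncation `B`.
-/

open Matrix

namespace Matrix

variable {R : Type*} [CommRing R] {n : ℕ}

theorem det_eq_corner_mul_det_of_last_row (M : Matrix (Fin (n + 1)) (Fin (n + 1)) R)
    (h : ∀ j ≠ Fin.last n, M (Fin.last n) j = 0) :
    M.det = M (Fin.last n) (Fin.last n) * (M.submatrix Fin.castSucc Fin.castSucc).det := by
  rw [det_succ_row M (Fin.last n), Fintype.sum_eq_single (Fin.last n) fun j hj => by simp [h j hj]]
  simp [← two_mul, pow_mul]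

theorem det_eq_corner_mul_det_of_last_col (M : Matrix (Fin (n + 1)) (Fin (n + 1)) R)
    (h : ∀ i ≠ Fin.last n, M i (Fin.last n) = 0) :
    M.det = M (Fin.last n) (Fin.last n) * (M.submatrix Fin.castSucc Fin.castSucc).det := by
  rw [← det_transpose, det_eq_corner_mul_det_of_last_row Mᵀ h, ← transpose_submatrix, det_transpose,
    transpose_apply]

theorem det_eq_of_last_row_eq_zero_off_last_two (M : Matrix (Fin (n + 2)) (Fin (n + 2)) R)
    (h : ∀ j, j ≠ (Fin.last n).castSucc → j ≠ Fin.last (n + 1) → M (Fin.last (n + 1)) j = 0) :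
    M.det = -(M (Fin.last (n + 1)) (Fin.last n).castSucc *
        (M.submatrix Fin.castSucc (Fin.last n).castSucc.succAbove).det) +
      M (Fin.last (n + 1)) (Fin.last (n + 1)) * (M.submatrix Fin.castSucc Fin.castSucc).det := by
  rw [det_succ_row M (Fin.last (n + 1)), Fintype.sum_eq_add (Fin.last n).castSucc _
    (Fin.castSucc_lt_last _).ne fun j hj => by simp [h j hj.1 hj.2]]
  have hodd : (-1 : R) ^ (n + 1 + n) = -1 := Odd.neg_one_pow ⟨n, by ring⟩
  simp [← two_mul, pow_mul, hodd]

end Matrix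

section Border

variable {r : ℕ}

@[simp] theorem border_castSucc_castSucc (A : Matrix (Fin r) (Fin (r + 1)) ℤ) (i : Fin r)
    (j : Fin (r + 1)) : border A i.castSucc j.castSucc = A i j := by
  simp [border, Nat.not_lt.mpr (Nat.le_of_lt_succ j.is_lt)]

@[simp] theorem border_last_castSucc (A : Matrix (Fin r) (Fin (r + 1)) ℤ) (j : Fin (r + 1)) :
    border A (Fin.last r) j.castSucc = if j = Fin.last r then 1 else 0 := by
  simp [border, Fin.ext_iff, j.is_lt.ne]

@[simp] theorem border_last_last (A : Matrix (Fin r) (Fin (r + 1)) ℤ) :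
    border A (Fin.last r) (Fin.last (r + 1)) = -2 := by
  simp [border]

@[simp] theorem border_castSucc_last (A : Matrix (Fin (r + 1)) (Fin (r + 2)) ℤ) (i : Fin (r + 1)) :
    border A i.castSucc (Fin.last (r + 2)) = if i = Fin.last r then 1 else 0 := by
  simp [border, Fin.ext_iff, Nat.not_lt.mpr (Nat.le_of_lt_succ i.is_lt)]

theorem degVec_border_last (A : Matrix (Fin r) (Fin (r + 1)) ℤ) :
    degVec (border A) (Fin.last (r + 1)) = -degVec A (Fin.last r) := by
  set N := (border A).submatrix id (Fin.last (r + 1)).succAbove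
  have hdet := det_eq_corner_mul_det_of_last_row N fun j hj => by simp [N, hj]
  have hminor : N.submatrix Fin.castSucc Fin.castSucc = A.submatrix id (Fin.last r).succAbove := by
    ext; simp [N]
  have hcorner : N (Fin.last r) (Fin.last r) = 1 := by simp [N]
  simp only [degVec, Fin.val_last]
  rw [hdet, hminor, hcorner]
  ring

theorem degVec_border_castSucc_last (A : Matrix (Fin r) (Fin (r + 1)) ℤ) :
    degVec (border A) (Fin.last r).castSucc = -2 * degVec A (Fin.last r) := by
  set N := (border A).submatrix id (Fin.last r).castSucc.succAbove
  have hdet := det_eq_corner_mul_det_of_last_row N fun j hj => by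
    obtain ⟨j, rfl⟩ := Fin.exists_castSucc_eq.mpr hj
    simp [N, Fin.castSucc_ne_last]
  have hminor : N.submatrix Fin.castSucc Fin.castSucc = A.submatrix id (Fin.last r).succAbove := by
    ext; simp [N]
  have hcorner : N (Fin.last r) (Fin.last r) = -2 := by simp [N]
  simp only [degVec, Fin.val_castSucc, Fin.val_last]
  rw [hdet, hminor, hcorner]
  ring

theorem degVec_border_castSucc_castSucc (A : Matrix (Fin (r + 1)) (Fin (r + 2)) ℤ)
    (j : Fin (r + 1)) :
    degVec (border A) j.castSucc.castSucc = -2 * degVec A j.castSucc - degVec (trunc A) j := by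
  set N := (border A).submatrix id j.castSucc.castSucc.succAbove
  have hdetN := det_eq_of_last_row_eq_zero_off_last_two N fun q hq hq' => by
    obtain ⟨q, rfl⟩ := Fin.exists_castSucc_eq.mpr hq'
    obtain ⟨q, rfl⟩ := Fin.exists_castSucc_eq.mpr (ne_of_apply_ne Fin.castSucc hq)
    simp [N, Fin.castSucc_ne_last]
  set P := N.submatrix Fin.castSucc (Fin.last r).castSucc.succAbove
  have hdetP := det_eq_corner_mul_det_of_last_col P fun i hi => by
    obtain ⟨i, rfl⟩ := Fin.exists_castSucc_eq.mpr hi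
    simp [P, N, Fin.castSucc_ne_last]
  have hminorA : N.submatrix Fin.castSucc Fin.castSucc = A.submatrix id j.castSucc.succAbove := by
    ext; simp [N]
  have hminorB : P.submatrix Fin.castSucc Fin.castSucc = (trunc A).submatrix id j.succAbove := by
    ext; simp [P, N, trunc]
  have hN₁ : N (Fin.last (r + 1)) (Fin.last r).castSucc = 1 := by simp [N]
  have hN₂ : N (Fin.last (r + 1)) (Fin.last (r + 1)) = -2 := by simp [N]
  have hP : P (Fin.last r) (Fin.last r) = 1 := by simp [P, N]
  simp only [degVec, Fin.val_castSucc]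
  rw [hdetN, hdetP, hminorA, hminorB, hN₁, hN₂, hP]
  ring

end Border

/-- Here `m = k + 3 ≥ 3`, `A` is an `(m-1) × m` integer matrix, `border A`
is its bordered matrix and `trunc A` is its truncation.  Then (0-indexed) the
degeneration vectors satisfy `d(A')_j = -2·d(A)_j - d(B)_j` for `1 ≤ j ≤ m-1`,
`d(A')_m = -2·d(A)_m` and `d(A')_{m+1} = -d(A)_m`. -/
theorem stmt0 (k : ℕ) (A : Matrix (Fin (k + 2)) (Fin (k + 3)) ℤ) :
    (∀ j : Fin (k + 2),
      degVec (border A) (j.castSucc.castSucc) =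
        -2 * degVec A j.castSucc - degVec (trunc A) j) ∧
    degVec (border A) ⟨k + 2, by omega⟩ = -2 * degVec A (Fin.last (k + 2)) ∧
    degVec (border A) (Fin.last (k + 3)) = -degVec A (Fin.last (k + 2)) :=
  ⟨degVec_border_castSucc_castSucc A, degVec_border_castSucc_last A, degVec_border_last A⟩
end

section
/- Define vectors d_n ∈ ℤ^{(n+25)/2} for odd n ≥ 5 by: d_5 = (1,4,1,5,1,4,4,4,6,5,14,9,10,4,2); d_7 = −(1,6,1,7,1,6,6,6,8,7,20,13,14,6,4,2); and, for every odd n ≥ 5, d_{n+4} = −2·(d_{n+2},0) − (d_n,0,0) + (−1)^{(n+3)/2}·2·(0,…,0,1) in ℤ^{(n+33)/2}. Then for every odd n ≥ 5, d_n = (−1)^{(n−1)/2}·c(n). -/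
/-!
Every entry of `c(n)` is an affine function of `n`, so `c(n+4) = 2 c(n+2) - c(n)` entrywise,
and the signs `(-1)^{(n-1)/2}` turn this into `d_{n+4} = -2 d_{n+2} - d_n`. The zero padding is
harmless because the tail formula `n - 1 - 2(k - 13)`, continued one and two places past the end
of `c(n)`, takes the values `0` and `-2`; the second is compensated by the correction
`2·(0,…,0,1)`.
-/

/-- For odd `n = 2t+5 ≥ 5`, the vector `c(n) ∈ ℤ^{(n+25)/2}`, namely
`(1, n-1, 1, n, 1, n-1, n-1, n-1, n+1, n, 3n-1, 2n-1, 2n, n-1, n-3, n-5, …, 4, 2)`. -/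
def cK (t : ℕ) : Fin (t + 15) → ℤ := fun j =>
  let n : ℤ := 2 * t + 5
  if h : (j : ℕ) < 14 then
    ![1, n - 1, 1, n, 1, n - 1, n - 1, n - 1, n + 1, n,
      3 * n - 1, 2 * n - 1, 2 * n, n - 1] ⟨j, h⟩
  else n - 1 - 2 * ((j : ℕ) - 13)

theorem Fin.snoc_smul_zero {n : ℕ} {R M : Type*} [Zero M] [SMulZeroClass R M] (c : R)
    (v : Fin n → M) :
    Fin.snoc (α := fun _ => M) (c • v) 0 = c • Fin.snoc (α := fun _ => M) v 0 := by
  ext j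
  induction j using Fin.lastCases <;> simp

def cEntry (n : ℤ) : ℕ → ℤ
  | 0 => 1
  | 1 => n - 1
  | 2 => 1
  | 3 => n
  | 4 => 1
  | 5 => n - 1
  | 6 => n - 1
  | 7 => n - 1
  | 8 => n + 1
  | 9 => n
  | 10 => 3 * n - 1
  | 11 => 2 * n - 1
  | 12 => 2 * n
  | 13 => n - 1
  | k + 14 => n - 3 - 2 * k

theorem cEntry_add_four (n : ℤ) (k : ℕ) :
    cEntry (n + 4) k = 2 * cEntry (n + 2) k - cEntry n k := by
  unfold cEntry; split <;> ring

theorem cK_apply (t : ℕ) (j : Fin (t + 15)) : cK t j = cEntry (2 * t + 5) j := by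
  obtain ⟨j, hj⟩ := j
  by_cases h : j < 14
  · interval_cases j <;> rfl
  · obtain ⟨k, rfl⟩ : ∃ k, j = k + 14 := ⟨j - 14, by omega⟩
    simp only [cK, dif_neg h, cEntry]
    push_cast
    ring

theorem snoc_cK (t : ℕ) :
    (Fin.snoc (cK t) 0 : Fin (t + 16) → ℤ) = fun j : Fin (t + 16) => cEntry (2 * t + 5) j := by
  ext j
  induction j using Fin.lastCases with
  | last =>
    simp only [Fin.snoc_last, cEntry, Fin.val_last, Nat.cast_add, Nat.cast_one]
    ring
  | cast i => simp [cK_apply]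

theorem snoc_snoc_cK (t : ℕ) :
    (Fin.snoc (Fin.snoc (cK t) 0) 0 : Fin (t + 17) → ℤ)
      = (fun j : Fin (t + 17) => cEntry (2 * t + 5) j)
        + (2 : ℤ) • Pi.single (Fin.last (t + 16)) (1 : ℤ) := by
  ext j
  induction j using Fin.lastCases with
  | last =>
    simp only [Fin.snoc_last, cEntry, Pi.add_apply, Pi.smul_apply, Pi.single_eq_same, Fin.val_last,
      Nat.cast_add, Nat.cast_ofNat, smul_eq_mul]
    ring
  | cast i => simp [snoc_cK, (Fin.castSucc_lt_last i).ne]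

theorem cK_add_two (t : ℕ) :
    cK (t + 2) = (2 : ℤ) • Fin.snoc (cK (t + 1)) 0 - Fin.snoc (Fin.snoc (cK t) 0) 0
      + (2 : ℤ) • Pi.single (Fin.last (t + 16)) (1 : ℤ) := by
  rw [snoc_cK, snoc_snoc_cK]
  ext j
  simp only [cK_apply, Pi.add_apply, Pi.sub_apply, Pi.smul_apply, smul_eq_mul]
  rw [show 2 * ((t + 2 : ℕ) : ℤ) + 5 = (2 * t + 5) + 4 by push_cast; ring,
    show 2 * ((t + 1 : ℕ) : ℤ) + 5 = (2 * t + 5) + 2 by push_cast; ring, cEntry_add_four]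
  ring

/-- Writing odd `n ≥ 5` as `n = 2t + 5`, so that `(n+25)/2 = t + 15`,
`(n-1)/2 = t + 2` and `(n+3)/2 = t + 4`: if `d_t ∈ ℤ^{t+15}` satisfies the given initial
conditions `d_5`, `d_7` and the recursion
`d_{n+4} = -2·(d_{n+2},0) - (d_n,0,0) + (-1)^{(n+3)/2}·2·(0,…,0,1)`,
then `d_n = (-1)^{(n-1)/2}·c(n)` for every odd `n ≥ 5`. -/
theorem stmt4 (d : ∀ t : ℕ, Fin (t + 15) → ℤ)
    (h5 : d 0 = ![1, 4, 1, 5, 1, 4, 4, 4, 6, 5, 14, 9, 10, 4, 2])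
    (h7 : d 1 = -![1, 6, 1, 7, 1, 6, 6, 6, 8, 7, 20, 13, 14, 6, 4, 2])
    (hrec : ∀ t : ℕ,
      d (t + 2) = (-2 : ℤ) • Fin.snoc (d (t + 1)) 0
        - Fin.snoc (Fin.snoc (d t) 0) 0
        + ((-1 : ℤ) ^ (t + 4) * 2) • Pi.single (Fin.last (t + 16)) 1) :
    ∀ t : ℕ, d t = ((-1 : ℤ) ^ (t + 2)) • cK t := by
  intro t
  induction t using Nat.twoStepInduction with
  | zero => rw [h5]; decide
  | one => rw [h7]; decide
  | more t ih ih' =>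
    rw [hrec, ih', ih, Fin.snoc_smul_zero, Fin.snoc_smul_zero, Fin.snoc_smul_zero, cK_add_two]
    simp only [pow_succ]
    module
end

section
/- For odd n ≥ 5 define e_n ∈ ℤ^{(n+25)/2} by e_n = (−1)^{(n−1)/2}·(1, 2, 1, 1, 1, n−2, 1, 2, n−2, 1, 1, 3, 4, 2, n−3, n−5, …, 4, 2), where the first 14 components of the unsigned vector are as listed and its (14+k)-th component equals n+1−2k for 1 ≤ k ≤ (n−3)/2. Then for every odd n ≥ 5, e_{n+4} = −2·(e_{n+2},0) − (e_n,0,0) + (−1)^{(n+3)/2}·2·(0,…,0,1) in ℤ^{(n+33)/2}. -/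
/-!
Every coordinate of `e_n`, read as a function of `n`, is `(-1)^{(n-1)/2}` times an affine function
of `n`, and such sequences satisfy `x_{n+4} = -2 x_{n+2} - x_n`. The tail `n-3, n-5, …, 4, 2`
continues as `0, -2`, so the zero padding of `e_{n+2}` and the first zero padding of `e_n` agree with
the continued formula; only the second zero of `e_n` misses its value `-2 (-1)^{(n-1)/2}`, and the
correction term makes up for it.
-/

/-- For odd `n = 2t+5 ≥ 5`, the vector `e_n ∈ ℤ^{(n+25)/2}`, namely
`(-1)^{(n-1)/2}·(1, 2, 1, 1, 1, n-2, 1, 2, n-2, 1, 1, 3, 4, 2, n-3, n-5, …, 4, 2)`. -/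
def eK (t : ℕ) : Fin (t + 15) → ℤ := fun j =>
  let n : ℤ := 2 * t + 5
  (-1) ^ (t + 2) *
    (if h : (j : ℕ) < 14 then
      ![1, 2, 1, 1, 1, n - 2, 1, 2, n - 2, 1, 1, 3, 4, 2] ⟨j, h⟩
    else n - 1 - 2 * ((j : ℕ) - 13))

def eKExt (t j : ℕ) : ℤ :=
  let n : ℤ := 2 * t + 5
  (-1) ^ (t + 2) *
    (if h : j < 14 then
      ![1, 2, 1, 1, 1, n - 2, 1, 2, n - 2, 1, 1, 3, 4, 2] ⟨j, h⟩
    else n - 1 - 2 * (j - 13))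

theorem eK_apply (t : ℕ) (j : Fin (t + 15)) : eK t j = eKExt t j := rfl

theorem eKExt_add_fifteen (t : ℕ) : eKExt t (t + 15) = 0 := by
  simp only [eKExt, dif_neg (show ¬t + 15 < 14 by omega)]
  push_cast
  ring

theorem eKExt_add_sixteen (t : ℕ) : eKExt t (t + 16) = -2 * (-1) ^ t := by
  simp only [eKExt, dif_neg (show ¬t + 16 < 14 by omega)]
  push_cast
  ring

theorem eKExt_recurrence (t j : ℕ) :
    eKExt (t + 2) j = -2 * eKExt (t + 1) j - eKExt t j := by
  simp only [eKExt]
  split_ifs with hj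
  · interval_cases j <;> simp <;> ring
  · push_cast
    ring

theorem snoc_eK_apply (t : ℕ) (j : Fin (t + 16)) :
    (Fin.snoc (eK t) 0 : Fin (t + 16) → ℤ) j = eKExt t j := by
  induction j using Fin.lastCases with
  | last => simp [eKExt_add_fifteen]
  | cast i => simp [eK_apply]

/-- Writing odd `n ≥ 5` as `n = 2t + 5` (so `(n-1)/2 = t+2` and
`(n+3)/2 = t+4`), the family `e_n` satisfies
`e_{n+4} = -2·(e_{n+2},0) - (e_n,0,0) + (-1)^{(n+3)/2}·2·(0,…,0,1)` in `ℤ^{(n+33)/2}`. -/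
theorem stmt6 : ∀ t : ℕ,
    eK (t + 2) = (-2 : ℤ) • Fin.snoc (eK (t + 1)) 0
      - Fin.snoc (Fin.snoc (eK t) 0) 0
      + ((-1 : ℤ) ^ (t + 4) * 2) • Pi.single (Fin.last (t + 16)) 1 := by
  intro t
  funext j
  simp only [Pi.add_apply, Pi.sub_apply, Pi.smul_apply, smul_eq_mul, eK_apply,
    eKExt_recurrence]
  induction j using Fin.lastCases with
  | last =>
    have h15 : eKExt (t + 1) (t + 16) = 0 := eKExt_add_fifteen (t + 1)
    simp only [Fin.snoc_last, Pi.single_eq_same, Fin.val_last, h15, eKExt_add_sixteen]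
    ring
  | cast i =>
    simp only [Fin.snoc_castSucc, snoc_eK_apply, eK_apply, Fin.val_castSucc,
      Pi.single_eq_of_ne (Fin.castSucc_lt_last i).ne]
    ring
end

section
/- Let n ≥ 5 be odd and set N = (n+25)/2. Let δ = c(n) ∈ ℤ^N, and let I = (i_1,…,i_N) ∈ {0,1,∞}^N be the tuple (∞, 0, 0, 0, ∞, 0, 1, 1, 0, 0, ∞, 0, ∞, ∞, ∞) followed by (n−5)/2 entries equal to ∞. Define V ∈ ℤ^{2N} by (V_{2ν−1}, V_{2ν}) = δ_ν·ρ_{i_ν} for 1 ≤ ν ≤ N. Let 𝔪 ∈ ℤ^{2N} be zero except 𝔪_{20} = 𝔪_{23} = 𝔪_{28} = −1, and let 𝔩 ∈ ℤ^{2N} have first 28 entries (−1, −1, 1, −1, 0, −1, −1, 0, 0, 0, 1, −1, 0, −1, 1, 0, −1, 0, 0, 2n−7, −1, 1, 2n−7, −1, 0, 0, 1, 2n−6) and all remaining entries zero. Then 𝔪 ∧ V = n and 𝔩 ∧ V = −(2n² − 10n + 2); in particular, −(𝔩 ∧ V)/(𝔪 ∧ V) = (2n² − 10n + 2)/n. 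-/
/-! Both `𝔪` and `𝔩` vanish beyond their first 14 pairs, so each pairing with `V` only sees
the first 14 entries of `c(n)` and `I₁`. These are affine in `n`, hence the two pairings
reduce to a fixed 14-term polynomial identity in `n`. -/

/-- Degeneration indices: the formal symbols `0`, `1`, `∞`. -/
inductive DegIdx : Type
  | zero
  | one
  | inf
  deriving DecidableEq

/-- `ρ₀ = (0,-1)`, `ρ₁ = (1,0)`, `ρ_∞ = (-1,1)`. -/
def rho : DegIdx → ℤ × ℤ
  | DegIdx.zero => (0, -1)
  | DegIdx.one => (1, 0)
  | DegIdx.inf => (-1, 1)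

/-- A vector in `ℤ^{2N}` is encoded as `Fin N → ℤ × ℤ`, the `ν`-th pair being the
`(2ν-1)`-th and `(2ν)`-th coordinates.  The pairing
`x ∧ y = ∑_{k=1}^{N} (x_{2k-1}·y_{2k} − x_{2k}·y_{2k-1})`. -/
def wedge {N : ℕ} (x y : Fin N → ℤ × ℤ) : ℤ :=
  ∑ k : Fin N, ((x k).1 * (y k).2 - (x k).2 * (y k).1)

/-- The meridian vector `𝔪 ∈ ℤ^{2N}`, `N = (n+25)/2`, of the triangulation of `K_n`
(`n = 2t+5`): zero except `𝔪₂₀ = 𝔪₂₃ = 𝔪₂₈ = -1`; in pair form, the 10th pair is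
`(0,-1)`, the 12th pair is `(-1,0)` and the 14th pair is `(0,-1)` (1-indexed). -/
def meridK (t : ℕ) : Fin (t + 15) → ℤ × ℤ := fun ν =>
  if (ν : ℕ) = 9 then (0, -1)
  else if (ν : ℕ) = 11 then (-1, 0)
  else if (ν : ℕ) = 13 then (0, -1)
  else (0, 0)

/-- The longitude vector `𝔩 ∈ ℤ^{2N}` of the triangulation of `K_n` (`n = 2t+5`), whose
first 28 entries are
`(-1,-1,1,-1,0,-1,-1,0,0,0,1,-1,0,-1,1,0,-1,0,0,2n-7,-1,1,2n-7,-1,0,0,1,2n-6)`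
and all remaining entries zero, written in pair form. -/
def longK (t : ℕ) : Fin (t + 15) → ℤ × ℤ := fun ν =>
  let n : ℤ := 2 * t + 5
  if h : (ν : ℕ) < 14 then
    ![(-1, -1), (1, -1), (0, -1), (-1, 0), (0, 0), (1, -1), (0, -1),
      (1, 0), (-1, 0), (0, 2 * n - 7), (-1, 1), (2 * n - 7, -1), (0, 0),
      (1, 2 * n - 6)] ⟨ν, h⟩
  else (0, 0)

/-- The degeneration index list `I₁` for `K_n` (`n = 2t+5`):
`(∞, 0, 0, 0, ∞, 0, 1, 1, 0, 0, ∞, 0, ∞, ∞, ∞)` followed by `(n-5)/2 = t` entries `∞`. -/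
def I1K (t : ℕ) : Fin (t + 15) → DegIdx := fun ν =>
  if h : (ν : ℕ) < 15 then
    ![DegIdx.inf, DegIdx.zero, DegIdx.zero, DegIdx.zero, DegIdx.inf, DegIdx.zero,
      DegIdx.one, DegIdx.one, DegIdx.zero, DegIdx.zero, DegIdx.inf, DegIdx.zero,
      DegIdx.inf, DegIdx.inf, DegIdx.inf] ⟨ν, h⟩
  else DegIdx.inf

/-- The vector `V ∈ ℤ^{2N}` with `(V_{2ν-1}, V_{2ν}) = δ_ν · ρ_{i_ν}`, where `δ = c(n)`
and `I = I₁`. -/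
def V10 (t : ℕ) : Fin (t + 15) → ℤ × ℤ := fun ν => cK t ν • rho (I1K t ν)

theorem Fin.sum_univ_eq_sum_castLE_of_eq_zero {M : Type*} [AddCommMonoid M] {m N : ℕ}
    (hmN : m ≤ N) (f : Fin N → M) (hf : ∀ ν : Fin N, m ≤ (ν : ℕ) → f ν = 0) :
    ∑ ν, f ν = ∑ k : Fin m, f (Fin.castLE hmN k) := by
  obtain ⟨r, rfl⟩ := Nat.exists_eq_add_of_le hmN
  have htail : ∀ i : Fin r, f (Fin.natAdd m i) = 0 := fun i => hf _ (by simp)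
  simp only [Fin.sum_univ_add, htail, Finset.sum_const_zero, add_zero]
  rfl

theorem wedge_eq_sum_of_eq_zero {m N : ℕ} (hmN : m ≤ N) (x y : Fin N → ℤ × ℤ)
    (hx : ∀ ν : Fin N, m ≤ (ν : ℕ) → x ν = 0) :
    wedge x y = ∑ k : Fin m,
      ((x (Fin.castLE hmN k)).1 * (y (Fin.castLE hmN k)).2 -
        (x (Fin.castLE hmN k)).2 * (y (Fin.castLE hmN k)).1) :=
  Fin.sum_univ_eq_sum_castLE_of_eq_zero hmN _ fun ν hν => by simp [hx ν hν]

theorem meridK_eq_zero (t : ℕ) (ν : Fin (t + 15)) (hν : 14 ≤ (ν : ℕ)) : meridK t ν = 0 := by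
  simp [meridK, show (ν : ℕ) ≠ 9 by omega, show (ν : ℕ) ≠ 11 by omega,
    show (ν : ℕ) ≠ 13 by omega]

theorem longK_eq_zero (t : ℕ) (ν : Fin (t + 15)) (hν : 14 ≤ (ν : ℕ)) : longK t ν = 0 := by
  simp [longK, show ¬(ν : ℕ) < 14 by omega]

theorem wedge_meridK_V10 (t : ℕ) : wedge (meridK t) (V10 t) = 2 * (t : ℤ) + 5 := by
  rw [wedge_eq_sum_of_eq_zero (by omega) _ _ (meridK_eq_zero t)]
  simp [Fin.sum_univ_succ, meridK, V10, cK, I1K, rho, two_mul]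

theorem wedge_longK_V10 (t : ℕ) :
    wedge (longK t) (V10 t) = -(2 * (2 * (t : ℤ) + 5) ^ 2 - 10 * (2 * (t : ℤ) + 5) + 2) := by
  rw [wedge_eq_sum_of_eq_zero (by omega) _ _ (longK_eq_zero t)]
  simp [Fin.sum_univ_succ, longK, V10, cK, I1K, rho]
  ring

/-- For odd `n = 2t+5 ≥ 5`:  `𝔪 ∧ V = n`, `𝔩 ∧ V = -(2n² - 10n + 2)`, and
`-(𝔩 ∧ V)/(𝔪 ∧ V) = (2n² - 10n + 2)/n`. -/
theorem stmt10 (t : ℕ) :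
    wedge (meridK t) (V10 t) = 2 * (t : ℤ) + 5 ∧
    wedge (longK t) (V10 t) =
      -(2 * (2 * (t : ℤ) + 5) ^ 2 - 10 * (2 * (t : ℤ) + 5) + 2) ∧
    ((-(wedge (longK t) (V10 t)) : ℤ) : ℚ) / ((wedge (meridK t) (V10 t) : ℤ) : ℚ) =
      (2 * (2 * (t : ℚ) + 5) ^ 2 - 10 * (2 * (t : ℚ) + 5) + 2) / (2 * (t : ℚ) + 5) := by
  refine ⟨wedge_meridK_V10 t, wedge_longK_V10 t, ?_⟩
  rw [wedge_meridK_V10, wedge_longK_V10]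
  push_cast
  ring
end

section
/- Let n ≥ 5 be odd and set N = (n+25)/2. Let δ ∈ ℤ^N be the vector (1, 2, 1, 1, 1, n−2, 1, 2, n−2, 1, 1, 2, 2, 1, n−3, n−5, …, 4, 2), whose first 14 components are as listed and whose (14+k)-th component equals n+1−2k for 1 ≤ k ≤ (n−3)/2. Let I = (i_1,…,i_N) ∈ {0,1,∞}^N be the tuple (∞, ∞, 0, 0, ∞, 0, 1, ∞, ∞, ∞, ∞, 1, ∞, 0, ∞) followed by (n−5)/2 entries equal to ∞. Define V ∈ ℤ^{2N} by (V_{2ν−1}, V_{2ν}) = δ_ν·ρ_{i_ν}. Let 𝔪 ∈ ℤ^{2N} be zero except 𝔪_{20} = 𝔪_{23} = 𝔪_{28} = −1, and let 𝔩 ∈ ℤ^{2N} have first 28 entries (−1, −1, 1, −1, 0, −1, −1, 0, 0, 0, 1, −1, 0, −1, 1, 0, −1, 0, 0, 2n−7, −1, 1, 2n−7, −1, 0, 0, 1, 2n−6) and all remaining entries zero. Then 𝔪 ∧ V = −1 and 𝔩 ∧ V = 0; in particular, −(𝔩 ∧ V)/(𝔪 ∧ V) = 0. -/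
/-- For odd `n = 2t+5 ≥ 5`, the vector
`δ = (1, 2, 1, 1, 1, n-2, 1, 2, n-2, 1, 1, 2, 2, 1, n-3, n-5, …, 4, 2) ∈ ℤ^{(n+25)/2}`. -/
def delta12 (t : ℕ) : Fin (t + 15) → ℤ := fun j =>
  let n : ℤ := 2 * t + 5
  if h : (j : ℕ) < 14 then
    ![1, 2, 1, 1, 1, n - 2, 1, 2, n - 2, 1, 1, 2, 2, 1] ⟨j, h⟩
  else n - 1 - 2 * ((j : ℕ) - 13)

/-- The degeneration index list `I₃` for `K_n` (`n = 2t+5`):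
`(∞, ∞, 0, 0, ∞, 0, 1, ∞, ∞, ∞, ∞, 1, ∞, 0, ∞)` followed by `(n-5)/2 = t` entries `∞`. -/
def I3K (t : ℕ) : Fin (t + 15) → DegIdx := fun ν =>
  if h : (ν : ℕ) < 15 then
    ![DegIdx.inf, DegIdx.inf, DegIdx.zero, DegIdx.zero, DegIdx.inf, DegIdx.zero,
      DegIdx.one, DegIdx.inf, DegIdx.inf, DegIdx.inf, DegIdx.inf, DegIdx.one,
      DegIdx.inf, DegIdx.zero, DegIdx.inf] ⟨ν, h⟩
  else DegIdx.inf

/-- The vector `V ∈ ℤ^{2N}` with `(V_{2ν-1}, V_{2ν}) = δ_ν · ρ_{i_ν}`, where `I = I₃`. -/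
def V12 (t : ℕ) : Fin (t + 15) → ℤ × ℤ := fun ν => delta12 t ν • rho (I3K t ν)

/-! Both 𝔪 and 𝔩 vanish beyond the 14th pair, so the two pairings only see the first 14 pairs
of V, which are explicit affine functions of n; the tail of δ plays no role. -/

theorem wedge_eq_sum_castLE {m N : ℕ} (h : m ≤ N) (x y : Fin N → ℤ × ℤ)
    (hx : ∀ k : Fin N, m ≤ k → x k = 0) :
    wedge x y = ∑ k : Fin m, ((x (k.castLE h)).1 * (y (k.castLE h)).2 -
      (x (k.castLE h)).2 * (y (k.castLE h)).1) := by
  rw [wedge, ← Finset.sum_subset (Finset.subset_univ (Finset.univ.map (Fin.castLEEmb h)))]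
  · rw [Finset.sum_map]
    rfl
  · intro k _ hk
    have hmk : m ≤ k := by
      by_contra! hkm
      exact hk (Finset.mem_map.2 ⟨⟨k, hkm⟩, Finset.mem_univ _, rfl⟩)
    simp [hx k hmk]

theorem meridK_eq_zero_of_le (t : ℕ) (k : Fin (t + 15)) (hk : 14 ≤ (k : ℕ)) :
    meridK t k = 0 := by
  simp [meridK, show (k : ℕ) ≠ 9 by omega, show (k : ℕ) ≠ 11 by omega,
    show (k : ℕ) ≠ 13 by omega]

theorem longK_eq_zero_of_le (t : ℕ) (k : Fin (t + 15)) (hk : 14 ≤ (k : ℕ)) :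
    longK t k = 0 := by
  simp [longK, show ¬ (k : ℕ) < 14 by omega]

theorem V12_castLE (t : ℕ) (h : 14 ≤ t + 15) (k : Fin 14) :
    V12 t (k.castLE h) =
      (![(-1, 1), (-2, 2), (0, -1), (0, -1), (-1, 1), (0, -(2 * t + 3)), (1, 0), (-2, 2),
        (-(2 * t + 3), 2 * t + 3), (-1, 1), (-1, 1), (2, 0), (-2, 2), (0, -1)] :
        Fin 14 → ℤ × ℤ) k := by
  fin_cases k <;> simp [V12, delta12, I3K, rho, Prod.ext_iff] <;> omega

/-- For odd `n = 2t+5 ≥ 5`:  `𝔪 ∧ V = -1`, `𝔩 ∧ V = 0`, and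
`-(𝔩 ∧ V)/(𝔪 ∧ V) = 0`. -/
theorem stmt12 (t : ℕ) :
    wedge (meridK t) (V12 t) = -1 ∧
    wedge (longK t) (V12 t) = 0 ∧
    ((-(wedge (longK t) (V12 t)) : ℤ) : ℚ) /
      ((wedge (meridK t) (V12 t) : ℤ) : ℚ) = 0 := by
  have hN : 14 ≤ t + 15 := by omega
  have hm : wedge (meridK t) (V12 t) = -1 := by
    rw [wedge_eq_sum_castLE hN _ _ (meridK_eq_zero_of_le t)]
    simp [V12_castLE, Fin.sum_univ_succ, meridK]
  have hl : wedge (longK t) (V12 t) = 0 := by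
    rw [wedge_eq_sum_castLE hN _ _ (longK_eq_zero_of_le t)]
    simp [V12_castLE, Fin.sum_univ_succ, longK]
    ring
  refine ⟨hm, hl, ?_⟩
  rw [hm, hl]
  norm_num
end

section
/- Let n ≥ 6 be even and set N = (n+34)/2. Let δ = c₁(n) ∈ ℤ^N, and let I = (i_1,…,i_N) ∈ {0,1,∞}^N be the tuple (∞, ∞, 0, ∞, ∞, 0, 1, 0, 1, 0, 1, 0, ∞, 0, 1, ∞, 0, 0) followed by (n−2)/2 entries equal to 0. Define V ∈ ℤ^{2N} by (V_{2ν−1}, V_{2ν}) = δ_ν·ρ_{i_ν}. Let 𝔪 ∈ ℤ^{2N} be zero except 𝔪_9 = −1, 𝔪_{31} = 1, 𝔪_{32} = −1, 𝔪_{34} = 1, 𝔪_{35} = 1, and let 𝔩 ∈ ℤ^{2N} have first 36 entries (1, −1, 1, −2, −1, 1, −1, 1, −8, −1, −1, 2, −2, 1, 1, −1, −2, 1, −1, 1, −2, 3, 0, −1, 0, 1, 0, 1, −1, −1, 10, −10, 1, 7, 7, 2) and all remaining entries zero. Then 𝔪 ∧ V = −n and 𝔩 ∧ V = −(14n − 2);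 in particular, −(𝔩 ∧ V)/(𝔪 ∧ V) = −(14n − 2)/n. -/
/-- For even `n = 2t+6 ≥ 6`, the vector `c₁(n) ∈ ℤ^{(n+34)/2}`, namely
`(2n-1, n, n, 1, n-1, n+1, n-1, 2n-1, n, 3n-2, 2n, n-1, n-1, n-1, 1, 1, 1, 1, n-2, n-4, …, 4, 2)`. -/
def cJ1 (t : ℕ) : Fin (t + 20) → ℤ := fun j =>
  let n : ℤ := 2 * t + 6
  if h : (j : ℕ) < 18 then
    ![2 * n - 1, n, n, 1, n - 1, n + 1, n - 1, 2 * n - 1, n, 3 * n - 2,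
      2 * n, n - 1, n - 1, n - 1, 1, 1, 1, 1] ⟨j, h⟩
  else n - 2 * ((j : ℕ) - 17)

/-- The meridian vector `𝔪 ∈ ℤ^{2N}`, `N = (n+34)/2`, of the triangulation of `J_n`
(`n = 2t+6`): zero except `𝔪₉ = -1`, `𝔪₃₁ = 1`, `𝔪₃₂ = -1`, `𝔪₃₄ = 1`, `𝔪₃₅ = 1`;
in pair form, the 5th pair is `(-1,0)`, the 16th is `(1,-1)`, the 17th is `(0,1)` and
the 18th is `(1,0)` (1-indexed). -/
def meridJ (t : ℕ) : Fin (t + 20) → ℤ × ℤ := fun ν =>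
  if (ν : ℕ) = 4 then (-1, 0)
  else if (ν : ℕ) = 15 then (1, -1)
  else if (ν : ℕ) = 16 then (0, 1)
  else if (ν : ℕ) = 17 then (1, 0)
  else (0, 0)

/-- The longitude vector `𝔩 ∈ ℤ^{2N}` of the triangulation of `J_n`, whose first 36
entries are `(1,-1,1,-2,-1,1,-1,1,-8,-1,-1,2,-2,1,1,-1,-2,1,-1,1,-2,3,0,-1,0,1,0,1,-1,-1,
10,-10,1,7,7,2)` and all remaining entries zero, written in pair form. -/
def longJ (t : ℕ) : Fin (t + 20) → ℤ × ℤ := fun ν =>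
  if h : (ν : ℕ) < 18 then
    ![(1, -1), (1, -2), (-1, 1), (-1, 1), (-8, -1), (-1, 2), (-2, 1),
      (1, -1), (-2, 1), (-1, 1), (-2, 3), (0, -1), (0, 1), (0, 1),
      (-1, -1), (10, -10), (1, 7), (7, 2)] ⟨ν, h⟩
  else (0, 0)

/-- The degeneration index list `I₁` for `J_n` (`n = 2t+6`):
`(∞, ∞, 0, ∞, ∞, 0, 1, 0, 1, 0, 1, 0, ∞, 0, 1, ∞, 0, 0)` followed by `(n-2)/2 = t+2`
entries `0`. -/
def I1J (t : ℕ) : Fin (t + 20) → DegIdx := fun ν =>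
  if h : (ν : ℕ) < 18 then
    ![DegIdx.inf, DegIdx.inf, DegIdx.zero, DegIdx.inf, DegIdx.inf, DegIdx.zero,
      DegIdx.one, DegIdx.zero, DegIdx.one, DegIdx.zero, DegIdx.one, DegIdx.zero,
      DegIdx.inf, DegIdx.zero, DegIdx.one, DegIdx.inf, DegIdx.zero, DegIdx.zero] ⟨ν, h⟩
  else DegIdx.zero

/-- The vector `V ∈ ℤ^{2N}` with `(V_{2ν-1}, V_{2ν}) = δ_ν · ρ_{i_ν}`, where `δ = c₁(n)`
and `I = I₁`. -/
def V13 (t : ℕ) : Fin (t + 20) → ℤ × ℤ := fun ν => cJ1 t ν • rho (I1J t ν)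

theorem wedge_eq_wedge_castLE {M N : ℕ} (h : M ≤ N) (x y : Fin N → ℤ × ℤ)
    (hx : ∀ i : Fin N, M ≤ (i : ℕ) → x i = 0) :
    wedge x y = wedge (fun k : Fin M => x (Fin.castLE h k)) (fun k => y (Fin.castLE h k)) := by
  obtain ⟨K, rfl⟩ := Nat.exists_eq_add_of_le h
  have htail : ∀ j : Fin K, x (Fin.natAdd M j) = 0 := fun j => hx _ (by simp)
  simp only [wedge, Fin.sum_univ_add, htail, Prod.fst_zero, Prod.snd_zero, zero_mul, sub_zero,
    Finset.sum_const_zero, add_zero]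
  rfl

theorem meridJ_eq_zero_of_le (t : ℕ) (i : Fin (t + 20)) (hi : 18 ≤ (i : ℕ)) :
    meridJ t i = 0 := by
  simp only [meridJ]
  rw [if_neg (by omega), if_neg (by omega), if_neg (by omega), if_neg (by omega)]
  rfl

theorem longJ_eq_zero_of_le (t : ℕ) (i : Fin (t + 20)) (hi : 18 ≤ (i : ℕ)) : longJ t i = 0 := by
  simp only [longJ, dif_neg (show ¬(i : ℕ) < 18 by omega)]
  rfl

theorem V13_castLE (t : ℕ) :
    (fun k : Fin 18 => V13 t (Fin.castLE (by omega) k)) =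
      let n : ℤ := 2 * t + 6
      ![(-(2 * n - 1), 2 * n - 1), (-n, n), (0, -n), (-1, 1), (-(n - 1), n - 1), (0, -(n + 1)),
        (n - 1, 0), (0, -(2 * n - 1)), (n, 0), (0, -(3 * n - 2)), (2 * n, 0), (0, -(n - 1)),
        (-(n - 1), n - 1), (0, -(n - 1)), (1, 0), (-1, 1), (0, -1), (0, -1)] := by
  funext k
  fin_cases k <;> simp [V13, cJ1, I1J, rho]

/-- For even `n = 2t+6 ≥ 6`:  `𝔪 ∧ V = -n`, `𝔩 ∧ V = -(14n - 2)`, and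
`-(𝔩 ∧ V)/(𝔪 ∧ V) = -(14n - 2)/n`. -/
theorem stmt13 (t : ℕ) :
    wedge (meridJ t) (V13 t) = -(2 * (t : ℤ) + 6) ∧
    wedge (longJ t) (V13 t) = -(14 * (2 * (t : ℤ) + 6) - 2) ∧
    ((-(wedge (longJ t) (V13 t)) : ℤ) : ℚ) / ((wedge (meridJ t) (V13 t) : ℤ) : ℚ) =
      -(14 * (2 * (t : ℚ) + 6) - 2) / (2 * (t : ℚ) + 6) := by
  have h18 : 18 ≤ t + 20 := by omega
  have hm : wedge (meridJ t) (V13 t) = -(2 * (t : ℤ) + 6) := by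
    rw [wedge_eq_wedge_castLE h18 _ _ (meridJ_eq_zero_of_le t), V13_castLE]
    simp [wedge, Fin.sum_univ_succ, meridJ]
  have hl : wedge (longJ t) (V13 t) = -(14 * (2 * (t : ℤ) + 6) - 2) := by
    rw [wedge_eq_wedge_castLE h18 _ _ (longJ_eq_zero_of_le t), V13_castLE]
    simp only [wedge, longJ, Fin.val_castLE, Fin.is_lt, dite_true, Fin.sum_univ_succ,
      Fin.sum_univ_zero, Matrix.cons_val_zero, Matrix.cons_val_succ, Fin.eta]
    ring
  refine ⟨hm, hl, ?_⟩
  rw [hm, hl]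
  push_cast
  rw [neg_neg, div_neg, neg_div]
end
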